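/- Let λ̄, μ̄₁, μ̄₂, μ̄₃ ∈ ℝ with μ̄₁, μ̄₂, μ̄₃ > 0, λ̄+2μ̄₁ > 0, λ̄+2μ̄₂ > 0, λ̄+2μ̄₃ > 0 and (λ̄+2μ̄₁)(λ̄+2μ̄₃) − λ̄(λ̄+2μ̄₂) ≥ 0. For k = (k₁,k₂) ∈ ℝ² define A(k) := !![(λ̄+2μ̄₁)k₁² + μ̄₂k₂², (λ̄+μ̄₂)k₁k₂; (λ̄+μ̄₂)k₁k₂, (λ̄+2μ̄₃)k₂² + μ̄₂k₁²]. Then A(k) is positive definite for every k ≠ 0; i.e., when λ̄+2μ̄₃ > 0 no eigenvalue of the acoustic matrix vanishes in any direction. -/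

import Mathlib

open Matrix

/-- The acoustic (Christoffel) matrix of the 2D orthorombic material. -/
noncomputable def acoustic (lb mb1 mb2 mb3 : ℝ) (k : Fin 2 → ℝ) :
    Matrix (Fin 2) (Fin 2) ℝ :=
  !![(lb + 2 * mb1) * k 0 ^ 2 + mb2 * k 1 ^ 2, (lb + mb2) * k 0 * k 1;
     (lb + mb2) * k 0 * k 1, (lb + 2 * mb3) * k 1 ^ 2 + mb2 * k 0 ^ 2]

/-! By Sylvester's criterion it suffices that the upper-left entry and the determinant of `A(k)`
are positive. The determinant is a positive combination of `k₁⁴` and `k₂⁴` plus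
`((λ̄+2μ̄₁)(λ̄+2μ̄₃) − λ̄(λ̄+2μ̄₂)) k₁²k₂² ≥ 0`. -/

lemma ne_zero_iff_fin_two {α : Type*} [Zero α] {x : Fin 2 → α} :
    x ≠ 0 ↔ x 0 ≠ 0 ∨ x 1 ≠ 0 := by
  rw [Ne, funext_iff, Fin.forall_fin_two, not_and_or]
  rfl

lemma mul_sq_add_mul_sq_pos {R : Type*} [CommRing R] [LinearOrder R] [IsStrictOrderedRing R]
    {a c x y : R} (ha : 0 < a) (hc : 0 < c) (hxy : x ≠ 0 ∨ y ≠ 0) :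
    0 < a * x ^ 2 + c * y ^ 2 := by
  rcases hxy with hx | hy
  · have := sq_pos_of_ne_zero hx
    positivity
  · have := sq_pos_of_ne_zero hy
    positivity

namespace Matrix

lemma mul_dotProduct_mulVec_fin_two {R : Type*} [CommRing R] [StarRing R] [TrivialStar R]
    {M : Matrix (Fin 2) (Fin 2) R} (hM : M.IsHermitian) (x : Fin 2 → R) :
    M 0 0 * (star x ⬝ᵥ (M *ᵥ x)) = (M 0 0 * x 0 + M 0 1 * x 1) ^ 2 + M.det * x 1 ^ 2 := by
  have h10 : M 1 0 = M 0 1 := by simpa using hM.apply 0 1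
  simp only [dotProduct, mulVec, Fin.sum_univ_two, star_trivial, det_fin_two, h10]
  ring

theorem posDef_of_fin_two {R : Type*} [CommRing R] [LinearOrder R] [IsStrictOrderedRing R]
    [StarRing R] [TrivialStar R] {M : Matrix (Fin 2) (Fin 2) R} (hM : M.IsHermitian)
    (h00 : 0 < M 0 0) (hdet : 0 < M.det) : M.PosDef := by
  refine posDef_iff_dotProduct_mulVec.2 ⟨hM, fun x hx => pos_of_mul_pos_right ?_ h00.le⟩
  rw [mul_dotProduct_mulVec_fin_two hM]
  by_cases hx1 : x 1 = 0
  · have hx0 : x 0 ≠ 0 := by simpa [hx1] using ne_zero_iff_fin_two.1 hx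
    have := sq_pos_of_ne_zero (mul_ne_zero h00.ne' hx0)
    simpa [hx1] using this
  · have := sq_pos_of_ne_zero hx1
    positivity

end Matrix

section acoustic

variable (lb mb1 mb2 mb3 : ℝ) (k : Fin 2 → ℝ)

lemma acoustic_isHermitian : (acoustic lb mb1 mb2 mb3 k).IsHermitian := by
  ext i j
  fin_cases i <;> fin_cases j <;> rfl

lemma acoustic_det : (acoustic lb mb1 mb2 mb3 k).det =
    mb2 * (lb + 2 * mb1) * (k 0 ^ 2) ^ 2 + mb2 * (lb + 2 * mb3) * (k 1 ^ 2) ^ 2 +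
      ((lb + 2 * mb1) * (lb + 2 * mb3) - lb * (lb + 2 * mb2)) * (k 0 ^ 2 * k 1 ^ 2) := by
  rw [acoustic, det_fin_two_of]
  ring

end acoustic

theorem stmt12_general (lb mb1 mb2 mb3 : ℝ)
    (hm2 : 0 < mb2)
    (h1 : 0 < lb + 2 * mb1) (h3 : 0 < lb + 2 * mb3)
    (h4 : 0 ≤ (lb + 2 * mb1) * (lb + 2 * mb3) - lb * (lb + 2 * mb2)) :
    ∀ k : Fin 2 → ℝ, k ≠ 0 → (acoustic lb mb1 mb2 mb3 k).PosDef := by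
  intro k hk
  have hk' := ne_zero_iff_fin_two.1 hk
  refine posDef_of_fin_two (acoustic_isHermitian ..) ?_ ?_
  · exact mul_sq_add_mul_sq_pos h1 hm2 hk'
  · have hsq : k 0 ^ 2 ≠ 0 ∨ k 1 ^ 2 ≠ 0 := hk'.imp (pow_ne_zero 2) (pow_ne_zero 2)
    rw [acoustic_det]
    exact add_pos_of_pos_of_nonneg (mul_sq_add_mul_sq_pos (mul_pos hm2 h1) (mul_pos hm2 h3) hsq)
      (mul_nonneg h4 (by positivity))

theorem stmt12 (lb mb1 mb2 mb3 : ℝ)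
    (hm1 : 0 < mb1) (hm2 : 0 < mb2) (hm3 : 0 < mb3)
    (h1 : 0 < lb + 2 * mb1) (h2 : 0 < lb + 2 * mb2) (h3 : 0 < lb + 2 * mb3)
    (h4 : 0 ≤ (lb + 2 * mb1) * (lb + 2 * mb3) - lb * (lb + 2 * mb2)) :
    ∀ k : Fin 2 → ℝ, k ≠ 0 → (acoustic lb mb1 mb2 mb3 k).PosDef :=
  stmt12_general lb mb1 mb2 mb3 hm2 h1 h3 h4
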